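/- arXiv:1204.6650 — 5 statements merged into one kernel-verified Lean document; each statement's English description precedes it below -/
import Mathlib

section
/- If X has an absolutely continuous density p with finite Fisher information I(X), then sup_x p(x) ≤ √(I(X)). -/
/-!
Since `p b - p a = ∫_a^b p'`, Cauchy–Schwarz applied to `|p'| = (|p'| / √p) · √p` gives
`|p b - p a| ≤ ∫ |p'| ≤ √I · (∫ p)^{1/2} = √I`. An integrable function on `ℝ` takes
arbitrarily small values, so letting `p a → 0` yields `p b ≤ √I`.
-/

open MeasureTheory Real

open scoped ENNReal

section

variable {α : Type*} [MeasurableSpace α] {μ : Measure α}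

theorem enorm_eq_rpow_mul_rpow_of_sq_div {g w : ℝ} (hw : 0 ≤ w) (hgw : w = 0 → g = 0) :
    ‖g‖ₑ = ENNReal.ofReal (g ^ 2 / w) ^ (1 / 2 : ℝ) * ENNReal.ofReal w ^ (1 / 2 : ℝ) := by
  rcases hw.eq_or_lt with hw0 | hwpos
  · simp [← hw0, hgw hw0.symm]
  · rw [← ENNReal.mul_rpow_of_nonneg _ _ (by norm_num), ← ENNReal.ofReal_mul (by positivity),
      div_mul_cancel₀ _ hwpos.ne', ENNReal.ofReal_rpow_of_nonneg (sq_nonneg g) (by norm_num),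
      ← sqrt_eq_rpow, sqrt_sq_eq_abs, enorm_eq_ofReal_abs]

theorem lintegral_enorm_le_sqrt_mul_sqrt {g w : α → ℝ} (hw : ∀ x, 0 ≤ w x)
    (hgw : ∀ x, w x = 0 → g x = 0) (hq : AEMeasurable (fun x => g x ^ 2 / w x) μ)
    (hwm : AEMeasurable w μ) :
    ∫⁻ x, ‖g x‖ₑ ∂μ ≤ (∫⁻ x, ENNReal.ofReal (g x ^ 2 / w x) ∂μ) ^ (1 / 2 : ℝ) *
      (∫⁻ x, ENNReal.ofReal (w x) ∂μ) ^ (1 / 2 : ℝ) := by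
  have hsq (a : ℝ≥0∞) : (a ^ (1 / 2 : ℝ)) ^ (2 : ℝ) = a := by
    rw [← ENNReal.rpow_mul]; norm_num
  simp_rw [enorm_eq_rpow_mul_rpow_of_sq_div (hw _) (hgw _)]
  have := ENNReal.lintegral_mul_le_Lp_mul_Lq μ HolderConjugate.two_two
    ((ENNReal.measurable_ofReal.aemeasurable.comp_aemeasurable hq).pow_const (1 / 2 : ℝ))
    ((ENNReal.measurable_ofReal.aemeasurable.comp_aemeasurable hwm).pow_const (1 / 2 : ℝ))
  simpa only [Pi.mul_apply, Function.comp_apply, hsq] using this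

theorem exists_lt_of_integrable (hμ : ¬IsFiniteMeasure μ) {f : α → ℝ}
    (hf : Integrable f μ) {ε : ℝ} (hε : 0 < ε) : ∃ x, f x < ε := by
  by_contra! hge
  have hconst : Integrable (fun _ => ε) μ :=
    hf.mono aestronglyMeasurable_const <| .of_forall fun x => by
      rw [norm_of_nonneg hε.le]; exact (hge x).trans (le_abs_self _)
  exact (integrable_const_iff.mp hconst).elim hε.ne' hμ

theorem lintegral_enorm_le_sqrt_integral_sq_div_mul_sqrt_integral {g w : α → ℝ}
    (hw : ∀ x, 0 ≤ w x) (hwi : Integrable w μ) (hgw : ∀ x, w x = 0 → g x = 0)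
    (hqi : IntegrableOn (fun x => g x ^ 2 / w x) {x | 0 < w x} μ) :
    ∫⁻ x, ‖g x‖ₑ ∂μ ≤
      ENNReal.ofReal (√(∫ x in {x | 0 < w x}, g x ^ 2 / w x ∂μ) * √(∫ x, w x ∂μ)) := by
  have hsupp : (fun x => ‖g x‖ₑ).support ⊆ {x | 0 < w x} := fun x hx =>
    (hw x).lt_of_ne' fun h => hx (by simp [hgw x h])
  have hq0 : ∀ x, 0 ≤ g x ^ 2 / w x := fun x => div_nonneg (sq_nonneg _) (hw x)
  -- `g ^ 2 / w` is only known to be measurable on `{0 < w}`, so Cauchy–Schwarz is applied there.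
  calc ∫⁻ x, ‖g x‖ₑ ∂μ = ∫⁻ x in {x | 0 < w x}, ‖g x‖ₑ ∂μ :=
        (setLIntegral_eq_of_support_subset hsupp).symm
    _ ≤ (∫⁻ x in {x | 0 < w x}, ENNReal.ofReal (g x ^ 2 / w x) ∂μ) ^ (1 / 2 : ℝ) *
          (∫⁻ x in {x | 0 < w x}, ENNReal.ofReal (w x) ∂μ) ^ (1 / 2 : ℝ) :=
        lintegral_enorm_le_sqrt_mul_sqrt hw hgw hqi.aemeasurable hwi.aemeasurable.restrict
    _ ≤ (∫⁻ x in {x | 0 < w x}, ENNReal.ofReal (g x ^ 2 / w x) ∂μ) ^ (1 / 2 : ℝ) *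
          (∫⁻ x, ENNReal.ofReal (w x) ∂μ) ^ (1 / 2 : ℝ) := by
        gcongr; exact Measure.restrict_le_self
    _ = ENNReal.ofReal (√(∫ x in {x | 0 < w x}, g x ^ 2 / w x ∂μ) * √(∫ x, w x ∂μ)) := by
        rw [← ofReal_integral_eq_lintegral_ofReal hqi (.of_forall hq0),
          ← ofReal_integral_eq_lintegral_ofReal hwi (.of_forall hw),
          ENNReal.ofReal_mul (sqrt_nonneg _), sqrt_eq_rpow, sqrt_eq_rpow,
          ENNReal.ofReal_rpow_of_nonneg (integral_nonneg hq0) (by norm_num),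
          ENNReal.ofReal_rpow_of_nonneg (integral_nonneg hw) (by norm_num)]

end

theorem enorm_intervalIntegral_le_lintegral_enorm {E : Type*} [NormedAddCommGroup E]
    [NormedSpace ℝ E] {μ : Measure ℝ} (f : ℝ → E) (a b : ℝ) :
    ‖∫ x in a..b, f x ∂μ‖ₑ ≤ ∫⁻ x, ‖f x‖ₑ ∂μ := by
  rw [← ofReal_norm, intervalIntegral.norm_integral_eq_norm_integral_uIoc, ofReal_norm]
  exact (enorm_integral_le_lintegral_enorm _).trans (setLIntegral_le_lintegral _ _)

/-- If `X` has an absolutely continuous density `p` with finite Fisher information `I`,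
then `p(x) ≤ √I` for every `x`. -/
theorem density_le_sqrt_fisher
    (p p' : ℝ → ℝ) (I : ℝ)
    (hnn : ∀ x, 0 ≤ p x) (hint : Integrable p) (h1 : ∫ x, p x = 1)
    (hFTC : ∀ a b : ℝ, p b - p a = ∫ x in a..b, p' x)
    (hconv : ∀ x, p x = 0 → p' x = 0)
    (hIfin : IntegrableOn (fun x => (p' x) ^ 2 / p x) {x | 0 < p x})
    (hI : I = ∫ x in {x | 0 < p x}, (p' x) ^ 2 / p x) :
    ∀ x, p x ≤ Real.sqrt I := by
  have hL1 : ∫⁻ x, ‖p' x‖ₑ ≤ ENNReal.ofReal √I := by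
    simpa [h1, hI] using
      lintegral_enorm_le_sqrt_integral_sq_div_mul_sqrt_integral hnn hint hconv hIfin
  have hosc (a b : ℝ) : |p b - p a| ≤ √I := by
    rw [← ENNReal.ofReal_le_ofReal_iff (sqrt_nonneg I), ← enorm_eq_ofReal_abs, hFTC]
    exact (enorm_intervalIntegral_le_lintegral_enorm _ a b).trans hL1
  intro x
  refine le_of_forall_pos_le_add fun ε hε => ?_
  obtain ⟨a, ha⟩ := exists_lt_of_integrable (not_isFiniteMeasure_iff.mpr volume_univ) hint hε
  linarith [(abs_le.mp (hosc a x)).2]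
end

section
/- If X has an absolutely continuous density with finite Fisher information I(X), then its characteristic function f(t) = E[e^{itX}] satisfies |f(t)| ≤ √(I(X))/|t| for all t ≠ 0. -/
/-!
Write `f(t) = ∫ e^{itx} p(x) dx`. Comparing `p` with its translate by `h = π / |t|`, for which
`e^{ith} = -1`, and using `p(x) - p(x - h) = ∫_{x-h}^{x} p'` together with Fubini, gives the
integration by parts formula `f(t) = -(∫ e^{itx} p'(x) dx) / (it)`, hence `|f(t)| ≤ ‖p'‖₁ / |t|`.
Writing `|p'| = √(p'^2 / p) · √p` and applying Cauchy–Schwarz gives `‖p'‖₁ ≤ √I · √(∫ p) = √I`.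
-/

open MeasureTheory Real Set

section FisherInformation

variable {α : Type*} {p p' : α → ℝ}

-- Since `a / 0 = 0`, the integrand of the Fisher information vanishes off `{p > 0}`.
lemma support_sq_div_subset (hnn : ∀ x, 0 ≤ p x) :
    Function.support (fun x => p' x ^ 2 / p x) ⊆ {x | 0 < p x} :=
  fun x hx => (hnn x).lt_of_ne' fun h => hx (by simp [h])

variable [MeasurableSpace α] {μ : Measure α}

lemma integral_mul_le_sqrt_integral_sq_mul_sqrt_integral_sq {f g : α → ℝ}
    (hf₀ : 0 ≤ᵐ[μ] f) (hg₀ : 0 ≤ᵐ[μ] g) (hf : MemLp f 2 μ) (hg : MemLp g 2 μ) :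
    ∫ a, f a * g a ∂μ ≤ √(∫ a, f a ^ 2 ∂μ) * √(∫ a, g a ^ 2 ∂μ) := by
  have h2 : ENNReal.ofReal 2 = 2 := by norm_num
  have := integral_mul_le_Lp_mul_Lq_of_nonneg Real.HolderConjugate.two_two hf₀ hg₀
    (h2 ▸ hf) (h2 ▸ hg)
  simpa only [rpow_two, ← sqrt_eq_rpow] using this

lemma memLp_two_sqrt {f : α → ℝ} (hf : Integrable f μ) (hf₀ : ∀ x, 0 ≤ f x) :
    MemLp (fun x => √(f x)) 2 μ := by
  refine (memLp_two_iff_integrable_sq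
    (continuous_sqrt.comp_aestronglyMeasurable hf.aestronglyMeasurable)).2 ?_
  simpa only [sq_sqrt (hf₀ _)] using hf

lemma abs_eq_sqrt_sq_div_mul_sqrt {a b : ℝ} (hb : 0 ≤ b) (hab : b = 0 → a = 0) :
    |a| = √(a ^ 2 / b) * √b := by
  rcases hb.eq_or_lt with rfl | hb
  · simp [hab rfl]
  · rw [← sqrt_mul (by positivity), div_mul_cancel₀ _ hb.ne', sqrt_sq_eq_abs]

lemma integrable_of_integrable_sq_div (hnn : ∀ x, 0 ≤ p x) (hp : Integrable p μ)
    (hconv : ∀ x, p x = 0 → p' x = 0) (hfis : Integrable (fun x => p' x ^ 2 / p x) μ)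
    (hmeas : AEStronglyMeasurable p' μ) : Integrable p' μ := by
  have h := (memLp_two_sqrt hfis fun x => div_nonneg (sq_nonneg _) (hnn x)).integrable_mul
    (memLp_two_sqrt hp hnn)
  refine (integrable_norm_iff hmeas).1 (h.congr (.of_forall fun x => ?_))
  simp [abs_eq_sqrt_sq_div_mul_sqrt (hnn x) (hconv x)]

lemma integral_abs_le_sqrt_integral_sq_div_mul_sqrt_integral (hnn : ∀ x, 0 ≤ p x) (hp : Integrable p μ)
    (hconv : ∀ x, p x = 0 → p' x = 0) (hfis : Integrable (fun x => p' x ^ 2 / p x) μ) :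
    ∫ x, |p' x| ∂μ ≤ √(∫ x, p' x ^ 2 / p x ∂μ) * √(∫ x, p x ∂μ) := by
  have hfis₀ : ∀ x, 0 ≤ p' x ^ 2 / p x := fun x => div_nonneg (sq_nonneg _) (hnn x)
  simp_rw [abs_eq_sqrt_sq_div_mul_sqrt (hnn _) (hconv _)]
  convert integral_mul_le_sqrt_integral_sq_mul_sqrt_integral_sq
    (.of_forall fun x => sqrt_nonneg (p' x ^ 2 / p x)) (.of_forall fun x => sqrt_nonneg (p x))
    (memLp_two_sqrt hfis hfis₀) (memLp_two_sqrt hp hnn) using 4 <;>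
  simp only [sq_sqrt (hfis₀ _), sq_sqrt (hnn _)]

end FisherInformation

section FundamentalTheorem

variable {E : Type*} [NormedAddCommGroup E] [NormedSpace ℝ E] {f g : ℝ → E}

lemma locallyIntegrable_of_sub_eq_intervalIntegral
    (hfg : ∀ a b, g b - g a = ∫ x in a..b, f x) (hg : ¬ ∃ c, g =ᵐ[volume] fun _ => c) :
    LocallyIntegrable f := by
  -- Near a point `x₀` where `f` is not integrable, every `∫ x in a..b, f x` with `a < x₀ < b` is
  -- the junk value `0`, which forces `g` to be constant off `x₀`.
  intro x₀
  by_contra hx₀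
  have hconst : ∀ a b, a < x₀ → x₀ < b → g a = g b := by
    intro a b ha hb
    have hab : ¬ IntervalIntegrable f volume a b := fun h =>
      hx₀ ⟨Ioo a b, Ioo_mem_nhds ha hb, h.1.mono_set Ioo_subset_Ioc_self⟩
    have := hfg a b
    rw [intervalIntegral.integral_undef hab, sub_eq_zero] at this
    exact this.symm
  refine hg ⟨g (x₀ + 1), ?_⟩
  filter_upwards [Measure.ae_ne volume x₀] with x hx
  rcases hx.lt_or_gt with hx | hx
  · exact hconst x _ hx (by linarith)
  · exact (hconst (x₀ - 1) x (by linarith) hx).symm.trans (hconst _ _ (by linarith) (by linarith))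

end FundamentalTheorem

section FourierIntegrationByParts

open Complex

variable {g g' : ℝ → ℂ} {t : ℝ}

lemma norm_cexp_I_mul_mul (t x : ℝ) : ‖cexp (I * t * x)‖ = 1 := by
  rw [show I * t * x = ((t * x : ℝ) : ℂ) * I by push_cast; ring]
  exact norm_exp_ofReal_mul_I _

lemma integrable_cexp_I_mul_mul (t : ℝ) (hg : Integrable g) :
    Integrable fun x : ℝ => cexp (I * t * x) * g x :=
  hg.bdd_mul (by fun_prop) (.of_forall fun x => (norm_cexp_I_mul_mul t x).le)

lemma cexp_I_mul_pi_div_abs (ht : t ≠ 0) : cexp (I * t * (π / |t| : ℝ)) = -1 := by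
  have ht' : (t : ℂ) ≠ 0 := ofReal_ne_zero.2 ht
  rcases ht.lt_or_gt with ht | ht
  · rw [abs_of_neg ht, show I * t * ((π / -t : ℝ) : ℂ) = -(π * I) by push_cast; field_simp]
    exact exp_neg_pi_mul_I
  · rw [abs_of_pos ht, show I * t * ((π / t : ℝ) : ℂ) = π * I by push_cast; field_simp]
    exact exp_pi_mul_I

lemma integral_cexp_I_mul_mul_sub_comp_sub (hg : Integrable g) (h : ℝ) :
    ∫ x : ℝ, cexp (I * t * x) * (g x - g (x - h)) =
      (1 - cexp (I * t * h)) * ∫ x : ℝ, cexp (I * t * x) * g x := by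
  have hshift : ∫ x : ℝ, cexp (I * t * x) * g (x - h) =
      cexp (I * t * h) * ∫ x : ℝ, cexp (I * t * x) * g x := by
    rw [← integral_sub_right_eq_self _ (-h), ← integral_const_mul]
    congr 1 with x
    simp only [sub_neg_eq_add, add_sub_cancel_right, ofReal_add, mul_add, Complex.exp_add]
    ring
  simp_rw [mul_sub]
  rw [integral_sub (integrable_cexp_I_mul_mul t hg)
    (integrable_cexp_I_mul_mul t (hg.comp_sub_right h)), hshift]
  ring

lemma integral_cexp_I_mul_mul_integral_Ioc (ht : t ≠ 0) (hg' : Integrable g') {h : ℝ}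
    (hh : 0 ≤ h) :
    ∫ x : ℝ, cexp (I * t * x) * ∫ s in Ioc (x - h) x, g' s =
      (cexp (I * t * h) - 1) / (I * t) * ∫ s : ℝ, cexp (I * t * s) * g' s := by
  set φ : ℝ → ℂ := (Ico 0 h).indicator 1
  have hφ : Integrable φ := (integrableOn_const (by simp)).integrable_indicator measurableSet_Ico
  have hF : Integrable (Function.uncurry fun x s : ℝ => cexp (I * t * x) * (g' s * φ (x - s)))
      (volume.prod volume) :=
    (hg'.convolution_integrand (ContinuousLinearMap.mul ℂ ℂ) hφ).bdd_mul (by fun_prop)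
      (.of_forall fun z => (norm_cexp_I_mul_mul t z.1).le)
  have hinner_s : ∀ x : ℝ, ∫ s, cexp (I * t * x) * (g' s * φ (x - s)) =
      cexp (I * t * x) * ∫ s in Ioc (x - h) x, g' s := by
    intro x
    rw [integral_const_mul, ← integral_indicator measurableSet_Ioc]
    refine congrArg _ (integral_congr_ae (.of_forall fun s => ?_))
    by_cases hs : s ∈ Ioc (x - h) x
    · have : x - s ∈ Ico 0 h := ⟨by linarith [hs.2], by linarith [hs.1]⟩
      simp [φ, hs, this]
    · have : x - s ∉ Ico 0 h := fun h' => hs ⟨by linarith [h'.2], by linarith [h'.1]⟩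
      simp [φ, hs, this]
  have hinner_x : ∀ s : ℝ, ∫ x : ℝ, cexp (I * t * x) * (g' s * φ (x - s)) =
      (cexp (I * t * h) - 1) / (I * t) * (cexp (I * t * s) * g' s) := by
    intro s
    have hc : I * (t : ℂ) ≠ 0 := mul_ne_zero I_ne_zero (ofReal_ne_zero.2 ht)
    have hind : ∀ x : ℝ, cexp (I * t * x) * (g' s * φ (x - s)) =
        g' s * (Ico s (s + h)).indicator (fun x : ℝ => cexp (I * t * x)) x := by
      intro x
      by_cases hx : x ∈ Ico s (s + h)
      · have : x - s ∈ Ico 0 h := ⟨by linarith [hx.1], by linarith [hx.2]⟩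
        simp [φ, hx, this, mul_comm]
      · have : x - s ∉ Ico 0 h := fun h' => hx ⟨by linarith [h'.1], by linarith [h'.2]⟩
        simp [φ, hx, this]
    simp_rw [hind]
    rw [integral_const_mul, integral_indicator measurableSet_Ico,
      Measure.restrict_congr_set Ico_ae_eq_Ioc, ← intervalIntegral.integral_of_le (by linarith),
      integral_exp_mul_complex hc]
    push_cast
    rw [mul_add, Complex.exp_add]
    ring
  rw [← funext hinner_s, integral_integral_swap hF, funext hinner_x, integral_const_mul]

lemma integral_cexp_I_mul_mul_eq_neg_div (ht : t ≠ 0) (hg : Integrable g) (hg' : Integrable g')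
    (hFTC : ∀ a b, g b - g a = ∫ x in a..b, g' x) :
    ∫ x : ℝ, cexp (I * t * x) * g x = -(∫ x : ℝ, cexp (I * t * x) * g' x) / (I * t) := by
  have hh : 0 ≤ π / |t| := by positivity
  have hdiff : ∀ x, g x - g (x - π / |t|) = ∫ s in Ioc (x - π / |t|) x, g' s := fun x => by
    rw [hFTC, intervalIntegral.integral_of_le (by linarith)]
  have key := integral_cexp_I_mul_mul_sub_comp_sub (t := t) hg (π / |t|)
  simp_rw [hdiff] at key
  rw [integral_cexp_I_mul_mul_integral_Ioc ht hg' hh, cexp_I_mul_pi_div_abs ht] at key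
  linear_combination -key / 2

lemma norm_integral_cexp_I_mul_mul_le (ht : t ≠ 0) (hg : Integrable g) (hg' : Integrable g')
    (hFTC : ∀ a b, g b - g a = ∫ x in a..b, g' x) :
    ‖∫ x : ℝ, cexp (I * t * x) * g x‖ ≤ (∫ x, ‖g' x‖) / |t| := by
  rw [integral_cexp_I_mul_mul_eq_neg_div ht hg hg' hFTC, norm_div, norm_neg, norm_mul, norm_I,
    one_mul, norm_real, Real.norm_eq_abs]
  gcongr
  refine (norm_integral_le_integral_norm _).trans_eq (integral_congr_ae (.of_forall fun x => ?_))
  simp [norm_cexp_I_mul_mul]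

end FourierIntegrationByParts

/-- If `X` has an absolutely continuous density `p` with finite Fisher information `I`,
then the characteristic function `f(t) = ∫ e^{itx} p(x) dx` satisfies `|f(t)| ≤ √I / |t|`
for all `t ≠ 0`. -/
theorem charFun_le_sqrt_fisher_div
    (p p' : ℝ → ℝ) (I : ℝ)
    (hnn : ∀ x, 0 ≤ p x) (hint : Integrable p) (h1 : ∫ x, p x = 1)
    (hFTC : ∀ a b : ℝ, p b - p a = ∫ x in a..b, p' x)
    (hconv : ∀ x, p x = 0 → p' x = 0)
    (hIfin : IntegrableOn (fun x => (p' x) ^ 2 / p x) {x | 0 < p x})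
    (hI : I = ∫ x in {x | 0 < p x}, (p' x) ^ 2 / p x) :
    ∀ t : ℝ, t ≠ 0 →
      ‖∫ x : ℝ, Complex.exp (Complex.I * t * x) * (p x : ℂ)‖ ≤ Real.sqrt I / |t| := by
  intro t ht
  have hp_ne_const : ¬ ∃ c, p =ᵐ[volume] fun _ => c := by
    rintro ⟨c, hc⟩
    simp [integral_congr_ae hc, measureReal_def] at h1
  have hp'_meas : AEStronglyMeasurable p' :=
    (locallyIntegrable_of_sub_eq_intervalIntegral hFTC hp_ne_const).aestronglyMeasurable
  have hfis : Integrable fun x => p' x ^ 2 / p x :=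
    (integrableOn_iff_integrable_of_support_subset (support_sq_div_subset hnn)).1 hIfin
  have hI' : I = ∫ x, p' x ^ 2 / p x := hI.trans <| setIntegral_eq_integral_of_forall_compl_eq_zero
    fun x hx => Function.notMem_support.1 fun h => hx (support_sq_div_subset hnn h)
  have hp' := integrable_of_integrable_sq_div hnn hint hconv hfis hp'_meas
  have hL1 := integral_abs_le_sqrt_integral_sq_div_mul_sqrt_integral hnn hint hconv hfis
  rw [h1, sqrt_one, mul_one, ← hI'] at hL1
  have hFTCℂ : ∀ a b : ℝ, (p b : ℂ) - p a = ∫ x in a..b, (p' x : ℂ) := fun a b => by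
    rw [intervalIntegral.integral_ofReal, ← hFTC, Complex.ofReal_sub]
  calc ‖∫ x : ℝ, Complex.exp (Complex.I * t * x) * (p x : ℂ)‖
      ≤ (∫ x, ‖(p' x : ℂ)‖) / |t| :=
        norm_integral_cexp_I_mul_mul_le ht hint.ofReal hp'.ofReal hFTCℂ
    _ ≤ √I / |t| := by
        gcongr
        simpa only [Complex.norm_real, Real.norm_eq_abs] using hL1
end

section
/- If a random variable X can be written as X = X₁ + X₂ with independent X₁, X₂ each having density with Fisher information at most I, then the density p of X satisfies |p'(x)| ≤ I^{3/4} √(p(x)) for all x, and p' has total variation ∫ |p''(x)| dx ≤ I. -/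
open MeasureTheory Real
open scoped ENNReal

/-!
Cauchy–Schwarz against the weight `p₂(y) dy` gives
`p'(x)² ≤ (∫ (p₁'² / p₁)(x - y) p₂(y) dy) · p(x) ≤ I · sup p₂ · p(x)`. Cauchy–Schwarz also gives
`‖q'‖₁ ≤ (∫ q'² / q)^{1/2} (∫ q)^{1/2} ≤ √I` for `q = p₁, p₂`, and since `p₂` is the integral of
`p₂'` and takes arbitrarily small values, `sup p₂ ≤ ‖p₂'‖₁ ≤ √I`; hence `p'(x)² ≤ I^{3/2} p(x)`.
Finally `‖p₁' ⋆ p₂'‖₁ ≤ ‖p₁'‖₁ ‖p₂'‖₁ ≤ I`.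
-/

section CauchySchwarz

variable {α : Type*} [MeasurableSpace α] {μ : Measure α}

theorem sq_lintegral_le_mul_of_sq_le {f g h : α → ℝ≥0∞} (hf : AEMeasurable f μ)
    (hg : AEMeasurable g μ) (hfgh : ∀ᵐ a ∂μ, h a ^ 2 ≤ f a * g a) :
    (∫⁻ a, h a ∂μ) ^ 2 ≤ (∫⁻ a, f a ∂μ) * ∫⁻ a, g a ∂μ := by
  have hsqrt : ∀ x : ℝ≥0∞, (x ^ (1 / 2 : ℝ)) ^ (2 : ℝ) = x := fun x => by
    rw [← ENNReal.rpow_mul]; norm_num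
  have hpt : ∀ᵐ a ∂μ, h a ≤ f a ^ (1 / 2 : ℝ) * g a ^ (1 / 2 : ℝ) := by
    filter_upwards [hfgh] with a ha
    rw [← ENNReal.mul_rpow_of_nonneg _ _ (by norm_num), one_div,
      ENNReal.le_rpow_inv_iff two_pos, ENNReal.rpow_two]
    exact ha
  calc (∫⁻ a, h a ∂μ) ^ 2 ≤ (∫⁻ a, f a ^ (1 / 2 : ℝ) * g a ^ (1 / 2 : ℝ) ∂μ) ^ 2 := by
        gcongr ?_ ^ 2
        exact lintegral_mono_ae hpt
    _ ≤ ((∫⁻ a, f a ∂μ) ^ (1 / 2 : ℝ) * (∫⁻ a, g a ∂μ) ^ (1 / 2 : ℝ)) ^ 2 := by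
        gcongr ?_ ^ 2
        simpa only [hsqrt, Pi.mul_apply] using ENNReal.lintegral_mul_le_Lp_mul_Lq μ .two_two
          (hf.pow_const (1 / 2 : ℝ)) (hg.pow_const (1 / 2 : ℝ))
    _ = (∫⁻ a, f a ∂μ) * ∫⁻ a, g a ∂μ := by
        rw [mul_pow, ← ENNReal.rpow_two, ← ENNReal.rpow_two, hsqrt, hsqrt]

theorem integral_abs_le_of_lintegral_le {F : α → ℝ} {C : ℝ} (hC : 0 ≤ C)
    (h : ∫⁻ a, ENNReal.ofReal |F a| ∂μ ≤ ENNReal.ofReal C) : ∫ a, |F a| ∂μ ≤ C := by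
  have := norm_integral_le_lintegral_norm (μ := μ) fun a => |F a|
  simp only [Real.norm_eq_abs, abs_abs] at this
  exact (le_abs_self _).trans (this.trans (ENNReal.toReal_le_of_le_ofReal hC h))

theorem ofReal_abs_integral_mul_le (f g : α → ℝ) :
    ENNReal.ofReal |∫ y, f y * g y ∂μ| ≤ ∫⁻ y, ENNReal.ofReal |f y| * ENNReal.ofReal |g y| ∂μ := by
  simpa [← Real.enorm_eq_ofReal_abs] using enorm_integral_le_lintegral_enorm (μ := μ) (f * g)

theorem sq_integral_le_mul_of_sq_le {f g h : α → ℝ} (hf : Integrable f μ) (hg : Integrable g μ)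
    (hf0 : 0 ≤ᵐ[μ] f) (hg0 : 0 ≤ᵐ[μ] g) (hfgh : ∀ᵐ a ∂μ, h a ^ 2 ≤ f a * g a) :
    (∫ a, h a ∂μ) ^ 2 ≤ (∫ a, f a ∂μ) * ∫ a, g a ∂μ := by
  have hfg0 : 0 ≤ (∫ a, f a ∂μ) * ∫ a, g a ∂μ :=
    mul_nonneg (integral_nonneg_of_ae hf0) (integral_nonneg_of_ae hg0)
  have hL : (∫⁻ a, ENNReal.ofReal |h a| ∂μ) ^ 2
      ≤ ENNReal.ofReal ((∫ a, f a ∂μ) * ∫ a, g a ∂μ) := by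
    rw [ENNReal.ofReal_mul (integral_nonneg_of_ae hf0), ofReal_integral_eq_lintegral_ofReal hf hf0,
      ofReal_integral_eq_lintegral_ofReal hg hg0]
    refine sq_lintegral_le_mul_of_sq_le hf.aemeasurable.ennreal_ofReal
      hg.aemeasurable.ennreal_ofReal ?_
    filter_upwards [hfgh, hf0] with a ha hfa
    rw [← ENNReal.ofReal_pow (abs_nonneg _), ← ENNReal.ofReal_mul hfa, sq_abs]
    exact ENNReal.ofReal_le_ofReal ha
  have habs : ∫ a, |h a| ∂μ ≤ √((∫ a, f a ∂μ) * ∫ a, g a ∂μ) := by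
    refine integral_abs_le_of_lintegral_le (sqrt_nonneg _) ?_
    rwa [← ENNReal.pow_le_pow_left_iff two_ne_zero, ← ENNReal.ofReal_pow (sqrt_nonneg _),
      sq_sqrt hfg0]
  calc (∫ a, h a ∂μ) ^ 2 = |∫ a, h a ∂μ| ^ 2 := (sq_abs _).symm
    _ ≤ (∫ a, |h a| ∂μ) ^ 2 := by gcongr; exact abs_integral_le_integral_abs
    _ ≤ (∫ a, f a ∂μ) * ∫ a, g a ∂μ := by
        rw [← sq_sqrt hfg0]
        gcongr

end CauchySchwarz

section Fisher

variable {α : Type*} {q q' : α → ℝ}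

theorem fisher_integrand_eq_indicator (hnn : ∀ x, 0 ≤ q x) :
    (fun x => q' x ^ 2 / q x) = {x | 0 < q x}.indicator fun x => q' x ^ 2 / q x := by
  -- off `{q > 0}` the integrand is `q' x ^ 2 / 0 = 0`
  ext x
  by_cases hx : 0 < q x
  · simp [hx]
  · simp [le_antisymm (not_lt.1 hx) (hnn x)]

theorem sq_eq_fisher_integrand_mul (hconv : ∀ x, q x = 0 → q' x = 0) (x : α) :
    q' x ^ 2 = q' x ^ 2 / q x * q x :=
  (div_mul_cancel_of_imp fun h => by simp [hconv x h]).symm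

variable [MeasurableSpace α] {μ : Measure α}

theorem integrable_fisher_integrand (hnn : ∀ x, 0 ≤ q x) (hq : AEMeasurable q μ)
    (hI : IntegrableOn (fun x => q' x ^ 2 / q x) {x | 0 < q x} μ) :
    Integrable (fun x => q' x ^ 2 / q x) μ := by
  rw [fisher_integrand_eq_indicator hnn]
  exact hI.integrable_indicator₀ (nullMeasurableSet_lt aemeasurable_const hq)

theorem integral_fisher_integrand (hnn : ∀ x, 0 ≤ q x) (hq : AEMeasurable q μ) :
    ∫ x, q' x ^ 2 / q x ∂μ = ∫ x in {x | 0 < q x}, q' x ^ 2 / q x ∂μ := by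
  conv_lhs => rw [fisher_integrand_eq_indicator hnn]
  exact integral_indicator₀ (nullMeasurableSet_lt aemeasurable_const hq)

theorem integrable_abs_deriv (hnn : ∀ x, 0 ≤ q x) (hq : Integrable q μ)
    (hconv : ∀ x, q x = 0 → q' x = 0) (hF : Integrable (fun x => q' x ^ 2 / q x) μ) :
    Integrable (fun x => |q' x|) μ := by
  have habs : (fun x => |q' x|) = fun x => √(q' x ^ 2 / q x * q x) := by
    ext x; rw [← sq_eq_fisher_integrand_mul hconv, sqrt_sq_eq_abs]
  refine (hF.add hq).mono' ?_ (ae_of_all _ fun x => ?_)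
  · rw [habs]; exact continuous_sqrt.comp_aestronglyMeasurable (hF.1.mul hq.1)
  · have hF0 : 0 ≤ q' x ^ 2 / q x := div_nonneg (sq_nonneg _) (hnn x)
    rw [norm_abs_eq_norm, norm_eq_abs, Pi.add_apply]
    refine abs_le_of_sq_le_sq ?_ (add_nonneg hF0 (hnn x))
    nlinarith [sq_eq_fisher_integrand_mul hconv x, hnn x]

theorem sq_integral_abs_deriv_le (hnn : ∀ x, 0 ≤ q x) (hq : Integrable q μ)
    (hconv : ∀ x, q x = 0 → q' x = 0) (hF : Integrable (fun x => q' x ^ 2 / q x) μ) :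
    (∫ x, |q' x| ∂μ) ^ 2 ≤ (∫ x, q' x ^ 2 / q x ∂μ) * ∫ x, q x ∂μ :=
  sq_integral_le_mul_of_sq_le hF hq (ae_of_all _ fun x => div_nonneg (sq_nonneg _) (hnn x))
    (ae_of_all _ hnn)
    (ae_of_all _ fun x => by rw [sq_abs, ← sq_eq_fisher_integrand_mul hconv])

theorem integral_abs_deriv_le_sqrt {I : ℝ} (hnn : ∀ x, 0 ≤ q x) (hq : Integrable q μ)
    (h1 : ∫ x, q x ∂μ = 1) (hconv : ∀ x, q x = 0 → q' x = 0)
    (hF : Integrable (fun x => q' x ^ 2 / q x) μ) (hI : ∫ x, q' x ^ 2 / q x ∂μ ≤ I) :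
    ∫ x, |q' x| ∂μ ≤ √I := by
  refine (le_abs_self _).trans (abs_le_sqrt ?_)
  calc (∫ x, |q' x| ∂μ) ^ 2 ≤ (∫ x, q' x ^ 2 / q x ∂μ) * ∫ x, q x ∂μ :=
        sq_integral_abs_deriv_le hnn hq hconv hF
    _ ≤ I := by rwa [h1, mul_one]

end Fisher

theorem MeasureTheory.Integrable.exists_lt_norm_lt {E : Type*} [NormedAddCommGroup E]
    {f : ℝ → E} (hf : Integrable f) {ε : ℝ} (hε : 0 < ε) (y : ℝ) : ∃ a < y, ‖f a‖ < ε := by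
  by_contra! h
  have := (measure_mono (s := Set.Iio y) h).trans_lt (hf.measure_norm_ge_lt_top hε)
  simp at this

theorem le_integral_abs_of_sub_eq_intervalIntegral {q q' : ℝ → ℝ} (hq : Integrable q)
    (hFTC : ∀ a b, q b - q a = ∫ x in a..b, q' x) (hq' : Integrable fun x => |q' x|) (y : ℝ) :
    q y ≤ ∫ x, |q' x| := by
  refine le_of_forall_pos_le_add fun ε hε => ?_
  obtain ⟨a, hay, ha⟩ := hq.exists_lt_norm_lt hε y
  have hseg : ∫ x in a..y, |q' x| ≤ ∫ x, |q' x| := by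
    rw [intervalIntegral.integral_of_le hay.le]
    exact setIntegral_le_integral hq' (ae_of_all _ fun _ => abs_nonneg _)
  calc q y = (∫ x in a..y, q' x) + q a := by linarith [hFTC a y]
    _ ≤ (∫ x in a..y, |q' x|) + ε := by
        gcongr
        · exact (le_abs_self _).trans (intervalIntegral.abs_integral_le_integral_abs hay.le)
        · exact (le_abs_self _).trans ha.le
    _ ≤ (∫ x, |q' x|) + ε := add_le_add_left hseg ε

section Convolution

variable {G : Type*} [MeasurableSpace G] [AddGroup G] [MeasurableAdd₂ G] [MeasurableNeg G]
  {μ : Measure G}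

theorem lintegral_lintegral_sub_mul [SFinite μ] [μ.IsAddRightInvariant] {f g : G → ℝ≥0∞}
    (hf : AEMeasurable f μ) (hg : AEMeasurable g μ) :
    ∫⁻ x, ∫⁻ y, f (x - y) * g y ∂μ ∂μ = (∫⁻ x, f x ∂μ) * ∫⁻ y, g y ∂μ := by
  have hfg : AEMeasurable (fun z : G × G => f (z.1 - z.2) * g z.2) (μ.prod μ) :=
    (hf.comp_fst.comp_quasiMeasurePreserving
      (measurePreserving_sub_prod μ μ).quasiMeasurePreserving).mul hg.comp_snd
  rw [lintegral_lintegral_swap hfg, ← lintegral_const_mul'' _ hg]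
  congr with y
  rw [← lintegral_mul_const'' _ hf]
  exact lintegral_sub_right_eq_self (fun x => f x * g y) y

theorem integral_abs_convolution_le [SFinite μ] [μ.IsAddRightInvariant] {f g : G → ℝ}
    (hf : Integrable (fun x => |f x|) μ) (hg : Integrable (fun x => |g x|) μ) :
    ∫ x, |∫ y, f (x - y) * g y ∂μ| ∂μ ≤ (∫ x, |f x| ∂μ) * ∫ y, |g y| ∂μ := by
  have habs0 : ∀ u : G → ℝ, 0 ≤ᵐ[μ] fun x => |u x| := fun u => ae_of_all _ fun _ => abs_nonneg _
  refine integral_abs_le_of_lintegral_le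
    (mul_nonneg (integral_nonneg_of_ae (habs0 f)) (integral_nonneg_of_ae (habs0 g))) ?_
  calc ∫⁻ x, ENNReal.ofReal |∫ y, f (x - y) * g y ∂μ| ∂μ
      ≤ ∫⁻ x, ∫⁻ y, ENNReal.ofReal |f (x - y)| * ENNReal.ofReal |g y| ∂μ ∂μ :=
        lintegral_mono fun x => ofReal_abs_integral_mul_le _ _
    _ = (∫⁻ x, ENNReal.ofReal |f x| ∂μ) * ∫⁻ y, ENNReal.ofReal |g y| ∂μ :=
        lintegral_lintegral_sub_mul hf.aemeasurable.ennreal_ofReal hg.aemeasurable.ennreal_ofReal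
    _ = ENNReal.ofReal ((∫ x, |f x| ∂μ) * ∫ y, |g y| ∂μ) := by
        rw [ENNReal.ofReal_mul (integral_nonneg_of_ae (habs0 f)),
          ofReal_integral_eq_lintegral_ofReal hf (habs0 f),
          ofReal_integral_eq_lintegral_ofReal hg (habs0 g)]

theorem sq_integral_sub_mul_le_of_fisher_le [μ.IsAddLeftInvariant] [μ.IsNegInvariant]
    {p₁ p₁' p₂ : G → ℝ} {J C : ℝ} (hnn₁ : ∀ x, 0 ≤ p₁ x) (hnn₂ : ∀ x, 0 ≤ p₂ x)
    (hp₁ : Integrable p₁ μ) (hp₂ : AEStronglyMeasurable p₂ μ)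
    (hconv₁ : ∀ x, p₁ x = 0 → p₁' x = 0) (hF : Integrable (fun x => p₁' x ^ 2 / p₁ x) μ)
    (hJ : ∫ x, p₁' x ^ 2 / p₁ x ∂μ ≤ J) (hC : ∀ y, p₂ y ≤ C) (x : G) :
    (∫ y, p₁' (x - y) * p₂ y ∂μ) ^ 2 ≤ J * C * ∫ y, p₁ (x - y) * p₂ y ∂μ := by
  have hbdd : ∀ᵐ y ∂μ, ‖p₂ y‖ ≤ C :=
    ae_of_all _ fun y => by rw [norm_of_nonneg (hnn₂ y)]; exact hC y
  have hF0 : ∀ z, 0 ≤ p₁' z ^ 2 / p₁ z := fun z => div_nonneg (sq_nonneg _) (hnn₁ z)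
  have hFx : Integrable (fun y => p₁' (x - y) ^ 2 / p₁ (x - y) * p₂ y) μ :=
    (hF.comp_sub_left x).mul_bdd hp₂ hbdd
  have hpx : Integrable (fun y => p₁ (x - y) * p₂ y) μ := (hp₁.comp_sub_left x).mul_bdd hp₂ hbdd
  have hFC : ∫ y, p₁' (x - y) ^ 2 / p₁ (x - y) * p₂ y ∂μ ≤ J * C := calc
    _ ≤ ∫ y, p₁' (x - y) ^ 2 / p₁ (x - y) * C ∂μ :=
        integral_mono hFx ((hF.comp_sub_left x).mul_const C)
          fun y => mul_le_mul_of_nonneg_left (hC y) (hF0 _)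
    _ ≤ J * C := by
        rw [integral_mul_const, integral_sub_left_eq_self (fun z => p₁' z ^ 2 / p₁ z) μ x]
        exact mul_le_mul_of_nonneg_right hJ ((hnn₂ x).trans (hC x))
  calc (∫ y, p₁' (x - y) * p₂ y ∂μ) ^ 2
      ≤ (∫ y, p₁' (x - y) ^ 2 / p₁ (x - y) * p₂ y ∂μ) * ∫ y, p₁ (x - y) * p₂ y ∂μ := by
        refine sq_integral_le_mul_of_sq_le hFx hpx
          (ae_of_all _ fun y => mul_nonneg (hF0 _) (hnn₂ y))
          (ae_of_all _ fun y => mul_nonneg (hnn₁ _) (hnn₂ y)) (ae_of_all _ fun y => le_of_eq ?_)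
        linear_combination p₂ y ^ 2 * sq_eq_fisher_integrand_mul hconv₁ (x - y)
    _ ≤ J * C * ∫ y, p₁ (x - y) * p₂ y ∂μ :=
        mul_le_mul_of_nonneg_right hFC (integral_nonneg fun y => mul_nonneg (hnn₁ _) (hnn₂ y))

end Convolution

theorem abs_le_rpow_mul_sqrt_of_sq_le {a b I : ℝ} (hI : 0 ≤ I) (h : a ^ 2 ≤ I * √I * b) :
    |a| ≤ I ^ ((3 : ℝ) / 4) * √b := by
  have hI34 : I ^ ((3 : ℝ) / 4) = √(I * √I) := by
    rw [sqrt_eq_rpow, sqrt_eq_rpow, ← rpow_one_add' hI (by norm_num), ← rpow_mul hI]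
    norm_num
  rw [hI34, ← sqrt_mul (mul_nonneg hI (sqrt_nonneg I))]
  exact abs_le_sqrt h

theorem convolution_two_fisher_bounds_general
    (p₁ p₂ p₁' p₂' : ℝ → ℝ) (I : ℝ)
    (hnn₁ : ∀ x, 0 ≤ p₁ x) (hint₁ : Integrable p₁) (h1₁ : ∫ x, p₁ x = 1)
    (hnn₂ : ∀ x, 0 ≤ p₂ x) (hint₂ : Integrable p₂) (h1₂ : ∫ x, p₂ x = 1)
    (hFTC₂ : ∀ a b : ℝ, p₂ b - p₂ a = ∫ x in a..b, p₂' x)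
    (hconv₁ : ∀ x, p₁ x = 0 → p₁' x = 0)
    (hconv₂ : ∀ x, p₂ x = 0 → p₂' x = 0)
    (hI₁fin : IntegrableOn (fun x => (p₁' x) ^ 2 / p₁ x) {x | 0 < p₁ x})
    (hI₂fin : IntegrableOn (fun x => (p₂' x) ^ 2 / p₂ x) {x | 0 < p₂ x})
    (hI₁ : ∫ x in {x | 0 < p₁ x}, (p₁' x) ^ 2 / p₁ x ≤ I)
    (hI₂ : ∫ x in {x | 0 < p₂ x}, (p₂' x) ^ 2 / p₂ x ≤ I)
    (p p' p'' : ℝ → ℝ)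
    (hp : ∀ x, p x = ∫ y, p₁ (x - y) * p₂ y)
    (hp' : ∀ x, p' x = ∫ y, p₁' (x - y) * p₂ y)
    (hp'' : ∀ x, p'' x = ∫ y, p₁' (x - y) * p₂' y) :
    (∀ x, |p' x| ≤ I ^ ((3 : ℝ) / 4) * Real.sqrt (p x)) ∧
      ∫ x, |p'' x| ≤ I := by
  have hF₁ := integrable_fisher_integrand hnn₁ hint₁.aemeasurable hI₁fin
  have hF₂ := integrable_fisher_integrand hnn₂ hint₂.aemeasurable hI₂fin
  have hJ₁ := (integral_fisher_integrand hnn₁ hint₁.aemeasurable).trans_le hI₁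
  have hJ₂ := (integral_fisher_integrand hnn₂ hint₂.aemeasurable).trans_le hI₂
  have hI0 : 0 ≤ I := (integral_nonneg fun x => div_nonneg (sq_nonneg _) (hnn₁ x)).trans hJ₁
  have hL₁ : ∫ x, |p₁' x| ≤ √I := integral_abs_deriv_le_sqrt hnn₁ hint₁ h1₁ hconv₁ hF₁ hJ₁
  have hL₂ : ∫ x, |p₂' x| ≤ √I := integral_abs_deriv_le_sqrt hnn₂ hint₂ h1₂ hconv₂ hF₂ hJ₂
  have hsup₂ : ∀ y, p₂ y ≤ √I := fun y =>
    (le_integral_abs_of_sub_eq_intervalIntegral hint₂ hFTC₂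
      (integrable_abs_deriv hnn₂ hint₂ hconv₂ hF₂) y).trans hL₂
  refine ⟨fun x => abs_le_rpow_mul_sqrt_of_sq_le hI0 ?_, ?_⟩
  · rw [hp', hp]
    exact sq_integral_sub_mul_le_of_fisher_le hnn₁ hnn₂ hint₁ hint₂.1 hconv₁ hF₁ hJ₁ hsup₂ x
  · simp_rw [hp'']
    calc _ ≤ (∫ x, |p₁' x|) * ∫ y, |p₂' y| :=
          integral_abs_convolution_le (integrable_abs_deriv hnn₁ hint₁ hconv₁ hF₁)
            (integrable_abs_deriv hnn₂ hint₂ hconv₂ hF₂)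
      _ ≤ √I * √I := mul_le_mul hL₁ hL₂ (integral_nonneg fun _ => abs_nonneg _) (sqrt_nonneg I)
      _ = I := mul_self_sqrt hI0

/-- If `X = X₁ + X₂` with independent `X₁, X₂` having densities `p₁, p₂` with Fisher
information at most `I`, then the density `p = p₁ * p₂` (convolution) of `X` satisfies
`|p'(x)| ≤ I^{3/4} √(p(x))` for all `x`, and `p'` has total variation `∫ |p''| ≤ I`,
where `p' = p₁' ⋆ p₂` and `p'' = p₁' ⋆ p₂'`. -/
theorem convolution_two_fisher_bounds
    (p₁ p₂ p₁' p₂' : ℝ → ℝ) (I : ℝ)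
    (hnn₁ : ∀ x, 0 ≤ p₁ x) (hint₁ : Integrable p₁) (h1₁ : ∫ x, p₁ x = 1)
    (hnn₂ : ∀ x, 0 ≤ p₂ x) (hint₂ : Integrable p₂) (h1₂ : ∫ x, p₂ x = 1)
    (hFTC₁ : ∀ a b : ℝ, p₁ b - p₁ a = ∫ x in a..b, p₁' x)
    (hFTC₂ : ∀ a b : ℝ, p₂ b - p₂ a = ∫ x in a..b, p₂' x)
    (hconv₁ : ∀ x, p₁ x = 0 → p₁' x = 0)
    (hconv₂ : ∀ x, p₂ x = 0 → p₂' x = 0)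
    (hI₁fin : IntegrableOn (fun x => (p₁' x) ^ 2 / p₁ x) {x | 0 < p₁ x})
    (hI₂fin : IntegrableOn (fun x => (p₂' x) ^ 2 / p₂ x) {x | 0 < p₂ x})
    (hI₁ : ∫ x in {x | 0 < p₁ x}, (p₁' x) ^ 2 / p₁ x ≤ I)
    (hI₂ : ∫ x in {x | 0 < p₂ x}, (p₂' x) ^ 2 / p₂ x ≤ I)
    (p p' p'' : ℝ → ℝ)
    (hp : ∀ x, p x = ∫ y, p₁ (x - y) * p₂ y)
    (hp' : ∀ x, p' x = ∫ y, p₁' (x - y) * p₂ y)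
    (hp'' : ∀ x, p'' x = ∫ y, p₁' (x - y) * p₂' y) :
    (∀ x, |p' x| ≤ I ^ ((3 : ℝ) / 4) * Real.sqrt (p x)) ∧
      ∫ x, |p'' x| ≤ I :=
  convolution_two_fisher_bounds_general p₁ p₂ p₁' p₂' I hnn₁ hint₁ h1₁ hnn₂ hint₂ h1₂ hFTC₂ hconv₁
    hconv₂ hI₁fin hI₂fin hI₁ hI₂ p p' p'' hp hp' hp''
end

section
/- If X = X₁ + X₂ with independent X₁, X₂ whose densities have Fisher information at most I, then the density p of X satisfies: p(x) = 0 implies p''(x) = 0; |p''(x)| ≤ I^{3/2} for all x; and ∫_{p>0} p''(x)²/p(x) dx ≤ I². -/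
open MeasureTheory Real

open scoped ENNReal

/-!
Each factor `pᵢ` is bounded by `√I`: it is small somewhere far to the left, and its total
variation `∫ |pᵢ'| = ∫ √(pᵢ'²/pᵢ) √pᵢ` is at most `√I` by Cauchy–Schwarz. Writing
`p₁'(x-y) p₂'(y)` as a product of square roots in two ways and applying Cauchy–Schwarz
in `y` gives
`p''(x)² ≤ (∫ (p₁'²/p₁)(x-y) p₂(y) dy) (∫ p₁(x-y) (p₂'²/p₂)(y) dy) ≤ (I √I)²` and
`p''(x)² ≤ p(x) ∫ (p₁'²/p₁)(x-y) (p₂'²/p₂)(y) dy`;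
integrating the latter over `x` (Tonelli) bounds `∫ p''²/p` by the product of the two Fisher
informations. If `p(x) = 0`, then `p₁(x-y) p₂(y) = 0` for a.e. `y`, and since `pᵢ = 0` forces
`pᵢ' = 0`, the integrand of `p''(x)` vanishes a.e. as well.
-/

section CauchySchwarz

variable {α : Type*} [MeasurableSpace α] {μ : Measure α}

theorem ENNReal.sq_lintegral_mul_le {f g : α → ℝ≥0∞} (hf : AEMeasurable f μ)
    (hg : AEMeasurable g μ) :
    (∫⁻ a, f a * g a ∂μ) ^ 2 ≤ (∫⁻ a, f a ^ 2 ∂μ) * ∫⁻ a, g a ^ 2 ∂μ := by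
  have hHolder := ENNReal.lintegral_mul_le_Lp_mul_Lq μ Real.HolderConjugate.two_two hf hg
  simp only [Pi.mul_apply, ENNReal.rpow_two] at hHolder
  calc (∫⁻ a, f a * g a ∂μ) ^ 2
      ≤ ((∫⁻ a, f a ^ 2 ∂μ) ^ (1 / 2 : ℝ) * (∫⁻ a, g a ^ 2 ∂μ) ^ (1 / 2 : ℝ)) ^ 2 :=
        pow_le_pow_left₀ zero_le hHolder 2
    _ = (∫⁻ a, f a ^ 2 ∂μ) * ∫⁻ a, g a ^ 2 ∂μ := by
        rw [mul_pow, ← ENNReal.rpow_natCast, ← ENNReal.rpow_natCast, ← ENNReal.rpow_mul,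
          ← ENNReal.rpow_mul]
        norm_num

theorem ENNReal.ofReal_sqrt_sq (r : ℝ) : ENNReal.ofReal √r ^ 2 = ENNReal.ofReal r := by
  rw [← ENNReal.ofReal_pow (Real.sqrt_nonneg _)]
  rcases le_total 0 r with hr | hr
  · rw [Real.sq_sqrt hr]
  · rw [Real.sqrt_eq_zero_of_nonpos hr, ENNReal.ofReal_of_nonpos hr]
    simp

theorem sq_lintegral_enorm_le {h c d : α → ℝ} (hc : ∀ a, 0 ≤ c a) (hcm : AEMeasurable c μ)
    (hdm : AEMeasurable d μ) (hcd : ∀ a, h a ^ 2 ≤ c a * d a) :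
    (∫⁻ a, ‖h a‖ₑ ∂μ) ^ 2 ≤ (∫⁻ a, ENNReal.ofReal (c a) ∂μ) * ∫⁻ a, ENNReal.ofReal (d a) ∂μ := by
  have hpointwise : ∀ a, ‖h a‖ₑ ≤ ENNReal.ofReal √(c a) * ENNReal.ofReal √(d a) := by
    intro a
    rw [enorm_eq_ofReal_abs, ← ENNReal.ofReal_mul (Real.sqrt_nonneg _), ← Real.sqrt_mul (hc a),
      ← Real.sqrt_sq_eq_abs]
    exact ENNReal.ofReal_le_ofReal (Real.sqrt_le_sqrt (hcd a))
  calc (∫⁻ a, ‖h a‖ₑ ∂μ) ^ 2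
      ≤ (∫⁻ a, ENNReal.ofReal √(c a) * ENNReal.ofReal √(d a) ∂μ) ^ 2 :=
        pow_le_pow_left₀ zero_le (lintegral_mono hpointwise) 2
    _ ≤ _ := by
        simpa only [ENNReal.ofReal_sqrt_sq] using
          ENNReal.sq_lintegral_mul_le hcm.sqrt.ennreal_ofReal hdm.sqrt.ennreal_ofReal

theorem sq_enorm_integral_le {h c d : α → ℝ} (hc : ∀ a, 0 ≤ c a) (hcm : AEMeasurable c μ)
    (hdm : AEMeasurable d μ) (hcd : ∀ a, h a ^ 2 ≤ c a * d a) :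
    ‖∫ a, h a ∂μ‖ₑ ^ 2 ≤ (∫⁻ a, ENNReal.ofReal (c a) ∂μ) * ∫⁻ a, ENNReal.ofReal (d a) ∂μ :=
  (pow_le_pow_left₀ zero_le (enorm_integral_le_lintegral_enorm _) 2).trans
    (sq_lintegral_enorm_le hc hcm hdm hcd)

theorem lintegral_ofReal_mul_le_of_le {a b : α → ℝ} {C : ℝ} (ha : ∀ y, 0 ≤ a y)
    (hb : ∀ y, b y ≤ C) :
    ∫⁻ y, ENNReal.ofReal (a y * b y) ∂μ ≤ (∫⁻ y, ENNReal.ofReal (a y) ∂μ) * ENNReal.ofReal C := by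
  rw [← lintegral_mul_const' _ _ ENNReal.ofReal_ne_top]
  refine lintegral_mono fun y => ?_
  rw [← ENNReal.ofReal_mul (ha y)]
  exact ENNReal.ofReal_le_ofReal (mul_le_mul_of_nonneg_left (hb y) (ha y))

end CauchySchwarz

theorem exists_lt_apply_lt_of_integrable {f : ℝ → ℝ} (hf : Integrable f) (x : ℝ) {ε : ℝ}
    (hε : 0 < ε) : ∃ a < x, f a < ε := by
  by_contra! hge
  have hconst : Integrable (fun _ : ℝ => ε) (volume.restrict (Set.Iio x)) := by
    refine hf.integrableOn.mono' aestronglyMeasurable_const ?_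
    filter_upwards [ae_restrict_mem measurableSet_Iio] with a ha
    rw [Real.norm_of_nonneg hε.le]
    exact hge a ha
  have hfinite := (integrable_const_iff.1 hconst).resolve_left hε.ne'
  simpa using hfinite.measure_univ_lt_top

theorem ofReal_le_lintegral_enorm_deriv {p p' : ℝ → ℝ} (hint : Integrable p)
    (hFTC : ∀ a b : ℝ, p b - p a = ∫ x in a..b, p' x) (x : ℝ) :
    ENNReal.ofReal (p x) ≤ ∫⁻ t, ‖p' t‖ₑ := by
  refine ENNReal.le_of_forall_pos_le_add fun ε hε _ => ?_
  obtain ⟨a, hax, hpa⟩ := exists_lt_apply_lt_of_integrable hint x (ε := ε) hε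
  have hvariation : ‖∫ t in a..x, p' t‖ₑ ≤ ∫⁻ t, ‖p' t‖ₑ := by
    rw [intervalIntegral.integral_of_le hax.le]
    exact (enorm_integral_le_lintegral_enorm _).trans (setLIntegral_le_lintegral _ _)
  calc ENNReal.ofReal (p x) = ENNReal.ofReal ((p x - p a) + p a) := by rw [sub_add_cancel]
    _ ≤ ENNReal.ofReal ‖p x - p a‖ + ENNReal.ofReal ε :=
        ENNReal.ofReal_add_le.trans (add_le_add (ENNReal.ofReal_le_ofReal (Real.le_norm_self _))
          (ENNReal.ofReal_le_ofReal hpa.le))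
    _ ≤ _ := by
        rw [ofReal_norm, hFTC, ENNReal.ofReal_coe_nnreal]
        gcongr

theorem lintegral_lintegral_sub_mul_s14 {F H : ℝ → ℝ≥0∞} (hF : AEMeasurable F)
    (hH : AEMeasurable H) :
    ∫⁻ x, ∫⁻ y, F (x - y) * H y = (∫⁻ x, F x) * ∫⁻ y, H y := by
  have hprod : AEMeasurable (fun z : ℝ × ℝ => F (z.1 - z.2) * H z.2) (volume.prod volume) :=
    AEMeasurable.comp_quasiMeasurePreserving
      ((hF.comp_quasiMeasurePreserving Measure.quasiMeasurePreserving_fst).mul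
        (hH.comp_quasiMeasurePreserving Measure.quasiMeasurePreserving_snd))
      (measurePreserving_sub_prod volume volume).quasiMeasurePreserving
  rw [lintegral_lintegral_swap hprod, ← lintegral_const_mul'' _ hH]
  refine lintegral_congr fun y => ?_
  have hFy : AEMeasurable (fun x => F (x - y)) :=
    hF.comp_quasiMeasurePreserving (measurePreserving_sub_right volume y).quasiMeasurePreserving
  rw [lintegral_mul_const'' _ hFy, lintegral_sub_right_eq_self, mul_comm]

theorem AEMeasurable.comp_sub_left {a : ℝ → ℝ} (ha : AEMeasurable a) (x : ℝ) :
    AEMeasurable (fun y => a (x - y)) :=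
  ha.comp_quasiMeasurePreserving
    (Measure.measurePreserving_sub_left volume x).quasiMeasurePreserving

/-- `φ` stands for the Fisher integrand `f'² / f`; stating `f'² = φ f` instead avoids the
division by zero where `f` vanishes. -/
structure IsFisherIntegrand (f f' φ : ℝ → ℝ) : Prop where
  nonneg : ∀ z, 0 ≤ f z
  weight_nonneg : ∀ z, 0 ≤ φ z
  aemeasurable : AEMeasurable f
  weight_aemeasurable : AEMeasurable φ
  sq_deriv_eq : ∀ z, f' z ^ 2 = φ z * f z

section FisherIntegrand

variable {p p' : ℝ → ℝ}

theorem sq_div_eq_zero_of_not_pos (hnn : ∀ x, 0 ≤ p x) :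
    ∀ x ∉ {x | 0 < p x}, p' x ^ 2 / p x = 0 := fun x hx => by
  rw [le_antisymm (not_lt.1 hx) (hnn x), div_zero]

theorem integrable_sq_div_of_integrableOn (hnn : ∀ x, 0 ≤ p x)
    (hfin : IntegrableOn (fun x => p' x ^ 2 / p x) {x | 0 < p x}) :
    Integrable (fun x => p' x ^ 2 / p x) :=
  (integrableOn_iff_integrable_of_support_subset
    (Function.support_subset_iff'.2 (sq_div_eq_zero_of_not_pos hnn))).1 hfin

theorem lintegral_sq_div_le {I : ℝ} (hnn : ∀ x, 0 ≤ p x)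
    (hfin : IntegrableOn (fun x => p' x ^ 2 / p x) {x | 0 < p x})
    (hI : ∫ x in {x | 0 < p x}, p' x ^ 2 / p x ≤ I) :
    ∫⁻ x, ENNReal.ofReal (p' x ^ 2 / p x) ≤ ENNReal.ofReal I := by
  rw [← ofReal_integral_eq_lintegral_ofReal (integrable_sq_div_of_integrableOn hnn hfin)
    (.of_forall fun x => div_nonneg (sq_nonneg _) (hnn x)),
    ← setIntegral_eq_integral_of_forall_compl_eq_zero (sq_div_eq_zero_of_not_pos hnn)]
  exact ENNReal.ofReal_le_ofReal hI

theorem isFisherIntegrand_sq_div (hnn : ∀ x, 0 ≤ p x) (hint : Integrable p)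
    (hconv : ∀ x, p x = 0 → p' x = 0)
    (hfin : IntegrableOn (fun x => p' x ^ 2 / p x) {x | 0 < p x}) :
    IsFisherIntegrand p p' (fun x => p' x ^ 2 / p x) where
  nonneg := hnn
  weight_nonneg x := div_nonneg (sq_nonneg _) (hnn x)
  aemeasurable := hint.aemeasurable
  weight_aemeasurable := (integrable_sq_div_of_integrableOn hnn hfin).aemeasurable
  sq_deriv_eq x := (div_mul_cancel_of_imp fun h => by simp [hconv x h]).symm

end FisherIntegrand

namespace IsFisherIntegrand

variable {f f' φ : ℝ → ℝ}

theorem deriv_eq_zero (hf : IsFisherIntegrand f f' φ) {z : ℝ} (hz : f z = 0) : f' z = 0 :=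
  pow_eq_zero_iff two_ne_zero |>.1 (by rw [hf.sq_deriv_eq, hz, mul_zero])

theorem sq_lintegral_enorm_deriv_le (hf : IsFisherIntegrand f f' φ) (hint : Integrable f)
    (h1 : ∫ x, f x = 1) :
    (∫⁻ x, ‖f' x‖ₑ) ^ 2 ≤ ∫⁻ x, ENNReal.ofReal (φ x) := by
  have hcs := sq_lintegral_enorm_le hf.weight_nonneg hf.weight_aemeasurable hf.aemeasurable
    fun x => (hf.sq_deriv_eq x).le
  rwa [← ofReal_integral_eq_lintegral_ofReal hint (.of_forall hf.nonneg), h1,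
    ENNReal.ofReal_one, mul_one] at hcs

theorem le_sqrt (hf : IsFisherIntegrand f f' φ) (hint : Integrable f) (h1 : ∫ x, f x = 1)
    (hFTC : ∀ a b : ℝ, f b - f a = ∫ x in a..b, f' x) {J : ℝ}
    (hφJ : ∫⁻ x, ENNReal.ofReal (φ x) ≤ ENNReal.ofReal J) (x : ℝ) :
    f x ≤ √J := by
  have hsq : (∫⁻ t, ‖f' t‖ₑ) ^ 2 ≤ ENNReal.ofReal √J ^ 2 := by
    rw [ENNReal.ofReal_sqrt_sq]
    exact (hf.sq_lintegral_enorm_deriv_le hint h1).trans hφJ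
  rw [← ENNReal.ofReal_le_ofReal_iff (Real.sqrt_nonneg _)]
  exact (ofReal_le_lintegral_enorm_deriv hint hFTC x).trans
    ((ENNReal.pow_le_pow_left_iff two_ne_zero).1 hsq)

end IsFisherIntegrand

section ScoreConvolution

variable {f g f' g' φ ψ : ℝ → ℝ}

theorem integral_sub_mul_eq_zero_of_integral_sub_mul_eq_zero {C : ℝ}
    (hf : IsFisherIntegrand f f' φ) (hg : IsFisherIntegrand g g' ψ) (hfC : ∀ z, f z ≤ C)
    (hgi : Integrable g) {x : ℝ} (h0 : ∫ y, f (x - y) * g y = 0) :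
    ∫ y, f' (x - y) * g' y = 0 := by
  have hint : Integrable (fun y => f (x - y) * g y) :=
    hgi.bdd_mul (hf.aemeasurable.comp_sub_left x).aestronglyMeasurable
      (.of_forall fun y => (Real.norm_of_nonneg (hf.nonneg _)).trans_le (hfC _))
  have hae := (integral_eq_zero_iff_of_nonneg
    (fun y => mul_nonneg (hf.nonneg _) (hg.nonneg y)) hint).1 h0
  refine integral_eq_zero_of_ae ?_
  filter_upwards [hae] with y hy
  rcases mul_eq_zero.1 hy with h | h
  · simp [hf.deriv_eq_zero h]
  · simp [hg.deriv_eq_zero h]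

theorem abs_integral_sub_mul_le {A J : ℝ} (hf : IsFisherIntegrand f f' φ)
    (hg : IsFisherIntegrand g g' ψ) (hfA : ∀ z, f z ≤ A) (hgA : ∀ z, g z ≤ A) (hJ : 0 ≤ J)
    (hφJ : ∫⁻ z, ENNReal.ofReal (φ z) ≤ ENNReal.ofReal J)
    (hψJ : ∫⁻ z, ENNReal.ofReal (ψ z) ≤ ENNReal.ofReal J) (x : ℝ) :
    |∫ y, f' (x - y) * g' y| ≤ J * A := by
  have hcs := sq_enorm_integral_le (fun y => mul_nonneg (hf.weight_nonneg (x - y)) (hg.nonneg y))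
    ((hf.weight_aemeasurable.comp_sub_left x).mul hg.aemeasurable)
    ((hf.aemeasurable.comp_sub_left x).mul hg.weight_aemeasurable)
    (h := fun y => f' (x - y) * g' y) (d := fun y => f (x - y) * ψ y)
    fun y => by rw [mul_pow, hf.sq_deriv_eq, hg.sq_deriv_eq]; linarith
  have hφg : ∫⁻ y, ENNReal.ofReal (φ (x - y) * g y) ≤ ENNReal.ofReal (J * A) := by
    refine (lintegral_ofReal_mul_le_of_le (fun y => hf.weight_nonneg (x - y)) hgA).trans ?_
    rw [lintegral_sub_left_eq_self (fun z => ENNReal.ofReal (φ z)), ENNReal.ofReal_mul hJ]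
    gcongr
  have hfψ : ∫⁻ y, ENNReal.ofReal (f (x - y) * ψ y) ≤ ENNReal.ofReal (J * A) := by
    simp_rw [mul_comm (f _)]
    refine (lintegral_ofReal_mul_le_of_le hg.weight_nonneg fun y => hfA (x - y)).trans ?_
    rw [ENNReal.ofReal_mul hJ]
    gcongr
  rw [← Real.norm_eq_abs,
    ← ENNReal.ofReal_le_ofReal_iff (mul_nonneg hJ ((hf.nonneg 0).trans (hfA 0))), ofReal_norm,
    ← ENNReal.pow_le_pow_left_iff two_ne_zero, sq (ENNReal.ofReal _)]
  exact hcs.trans (mul_le_mul' hφg hfψ)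

theorem ofReal_sq_div_le_lintegral (hf : IsFisherIntegrand f f' φ)
    (hg : IsFisherIntegrand g g' ψ) (x : ℝ) :
    ENNReal.ofReal ((∫ y, f' (x - y) * g' y) ^ 2 / ∫ y, f (x - y) * g y) ≤
      ∫⁻ y, ENNReal.ofReal (φ (x - y)) * ENNReal.ofReal (ψ y) := by
  set P := ∫ y, f (x - y) * g y
  rcases le_or_gt P 0 with hP | hP
  · rw [ENNReal.ofReal_of_nonpos (div_nonpos_of_nonneg_of_nonpos (sq_nonneg _) hP)]
    exact zero_le
  have hint : Integrable (fun y => f (x - y) * g y) := by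
    by_contra hni
    exact hP.ne' (integral_undef hni)
  have hcs := sq_enorm_integral_le
    (fun y => mul_nonneg (hf.weight_nonneg (x - y)) (hg.weight_nonneg y))
    ((hf.weight_aemeasurable.comp_sub_left x).mul hg.weight_aemeasurable)
    ((hf.aemeasurable.comp_sub_left x).mul hg.aemeasurable)
    (h := fun y => f' (x - y) * g' y) (d := fun y => f (x - y) * g y)
    fun y => by rw [mul_pow, hf.sq_deriv_eq, hg.sq_deriv_eq]; linarith
  rw [← ofReal_integral_eq_lintegral_ofReal hint
    (.of_forall fun y => mul_nonneg (hf.nonneg (x - y)) (hg.nonneg y))] at hcs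
  simp_rw [← ENNReal.ofReal_mul (hf.weight_nonneg _)]
  rw [ENNReal.ofReal_div_of_pos hP, ← sq_abs, ENNReal.ofReal_pow (abs_nonneg _),
    ← Real.norm_eq_abs, ofReal_norm]
  exact ENNReal.div_le_of_le_mul hcs

end ScoreConvolution

/-- If `X = X₁ + X₂` with independent `X₁, X₂` having densities of Fisher information at
most `I`, then the density `p = p₁ ⋆ p₂` of `X` satisfies: `p(x) = 0 → p''(x) = 0`,
`|p''(x)| ≤ I^{3/2}` for all `x`, and `∫_{p>0} p''²/p ≤ I²`. Here `p'' = p₁' ⋆ p₂'`. -/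
theorem convolution_two_second_deriv_bounds
    (p₁ p₂ p₁' p₂' : ℝ → ℝ) (I : ℝ)
    (hnn₁ : ∀ x, 0 ≤ p₁ x) (hint₁ : Integrable p₁) (h1₁ : ∫ x, p₁ x = 1)
    (hnn₂ : ∀ x, 0 ≤ p₂ x) (hint₂ : Integrable p₂) (h1₂ : ∫ x, p₂ x = 1)
    (hFTC₁ : ∀ a b : ℝ, p₁ b - p₁ a = ∫ x in a..b, p₁' x)
    (hFTC₂ : ∀ a b : ℝ, p₂ b - p₂ a = ∫ x in a..b, p₂' x)
    (hconv₁ : ∀ x, p₁ x = 0 → p₁' x = 0)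
    (hconv₂ : ∀ x, p₂ x = 0 → p₂' x = 0)
    (hI₁fin : IntegrableOn (fun x => (p₁' x) ^ 2 / p₁ x) {x | 0 < p₁ x})
    (hI₂fin : IntegrableOn (fun x => (p₂' x) ^ 2 / p₂ x) {x | 0 < p₂ x})
    (hI₁ : ∫ x in {x | 0 < p₁ x}, (p₁' x) ^ 2 / p₁ x ≤ I)
    (hI₂ : ∫ x in {x | 0 < p₂ x}, (p₂' x) ^ 2 / p₂ x ≤ I)
    (p p'' : ℝ → ℝ)
    (hp : ∀ x, p x = ∫ y, p₁ (x - y) * p₂ y)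
    (hp'' : ∀ x, p'' x = ∫ y, p₁' (x - y) * p₂' y) :
    (∀ x, p x = 0 → p'' x = 0) ∧
    (∀ x, |p'' x| ≤ I ^ ((3 : ℝ) / 2)) ∧
    (∫⁻ x in {x | 0 < p x}, ENNReal.ofReal ((p'' x) ^ 2 / p x) ≤ ENNReal.ofReal (I ^ 2)) := by
  have hF₁ := isFisherIntegrand_sq_div hnn₁ hint₁ hconv₁ hI₁fin
  have hF₂ := isFisherIntegrand_sq_div hnn₂ hint₂ hconv₂ hI₂fin
  have hJ₁ := lintegral_sq_div_le hnn₁ hI₁fin hI₁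
  have hJ₂ := lintegral_sq_div_le hnn₂ hI₂fin hI₂
  have hI0 : 0 ≤ I := (integral_nonneg fun x => hF₁.weight_nonneg x).trans hI₁
  have hb₁ := hF₁.le_sqrt hint₁ h1₁ hFTC₁ hJ₁
  have hb₂ := hF₂.le_sqrt hint₂ h1₂ hFTC₂ hJ₂
  refine ⟨fun x hx => ?_, fun x => ?_, ?_⟩
  · rw [hp'']
    exact integral_sub_mul_eq_zero_of_integral_sub_mul_eq_zero hF₁ hF₂ hb₁ hint₂
      ((hp x).symm.trans hx)
  · have hrpow : I ^ ((3 : ℝ) / 2) = I * √I := by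
      rw [sqrt_eq_rpow, ← rpow_one_add' hI0 (by norm_num)]
      norm_num
    rw [hp'', hrpow]
    exact abs_integral_sub_mul_le hF₁ hF₂ hb₁ hb₂ hI0 hJ₁ hJ₂ x
  · calc ∫⁻ x in {x | 0 < p x}, ENNReal.ofReal (p'' x ^ 2 / p x)
        ≤ ∫⁻ x, ∫⁻ y, ENNReal.ofReal (p₁' (x - y) ^ 2 / p₁ (x - y)) *
            ENNReal.ofReal (p₂' y ^ 2 / p₂ y) :=
          (setLIntegral_le_lintegral _ _).trans <| lintegral_mono fun x => by
            rw [hp, hp'']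
            exact ofReal_sq_div_le_lintegral hF₁ hF₂ x
      _ = (∫⁻ x, ENNReal.ofReal (p₁' x ^ 2 / p₁ x)) * ∫⁻ y, ENNReal.ofReal (p₂' y ^ 2 / p₂ y) :=
          lintegral_lintegral_sub_mul_s14 hF₁.weight_aemeasurable.ennreal_ofReal
            hF₂.weight_aemeasurable.ennreal_ofReal
      _ ≤ ENNReal.ofReal (I ^ 2) := by
          rw [sq, ENNReal.ofReal_mul hI0]
          exact mul_le_mul' hJ₁ hJ₂
end

section
/- If X has an absolutely continuous density p, then for any s > 0, ∫ |x|^s |p'(x)| dx ≤ √(β_{2s} I(X)), where β_{2s} = E|X|^{2s}. -/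
/-!
Off the zero set of `p`, factor `|x|^s |p'| = (|x|^s √p) · (|p'| / √p)` and apply the
Cauchy–Schwarz inequality; on the zero set of `p` both sides vanish because `p' = 0` there.
Since `p'` is not assumed measurable, Hölder's inequality is first extended to a second factor
that is an arbitrary function, by passing to a measurable minorant of the integrand.
-/

open MeasureTheory Real

open scoped ENNReal

namespace ENNReal

variable {α : Type*} [MeasurableSpace α] {μ : Measure α}

theorem lintegral_le_Lp_mul_Lq_of_le_mul {p q : ℝ} (hpq : p.HolderConjugate q)
    {f u v : α → ℝ≥0∞} (hu : AEMeasurable u μ) (hu_top : ∀ x, u x ≠ ∞)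
    (hf : ∀ x, f x ≤ u x * v x) :
    ∫⁻ x, f x ∂μ ≤ (∫⁻ x, u x ^ p ∂μ) ^ (1 / p) * (∫⁻ x, v x ^ q ∂μ) ^ (1 / q) := by
  obtain ⟨w, hw_meas, hw_le, hw_eq⟩ := exists_measurable_le_lintegral_eq μ f
  have hw_le_mul : ∀ x, w x ≤ u x * (w x / u x) := fun x => by
    rcases eq_or_ne (u x) 0 with hu0 | hu0
    · simpa [hu0] using (hw_le x).trans (hf x)
    · rw [ENNReal.mul_div_cancel hu0 (hu_top x)]
  have hw_div_le : ∀ x, w x / u x ≤ v x := fun x =>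
    ENNReal.div_le_of_le_mul (by rw [mul_comm]; exact (hw_le x).trans (hf x))
  calc ∫⁻ x, f x ∂μ = ∫⁻ x, w x ∂μ := hw_eq
    _ ≤ ∫⁻ x, (u * fun x => w x / u x) x ∂μ := lintegral_mono hw_le_mul
    _ ≤ (∫⁻ x, u x ^ p ∂μ) ^ (1 / p) * (∫⁻ x, (w x / u x) ^ q ∂μ) ^ (1 / q) :=
      lintegral_mul_le_Lp_mul_Lq μ hpq hu (hw_meas.aemeasurable.div hu)
    _ ≤ (∫⁻ x, u x ^ p ∂μ) ^ (1 / p) * (∫⁻ x, v x ^ q ∂μ) ^ (1 / q) := by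
      have hq : 0 ≤ q := hpq.symm.nonneg
      gcongr _ * ?_
      exact rpow_le_rpow (lintegral_mono fun x => rpow_le_rpow (hw_div_le x) hq)
        (one_div_nonneg.2 hq)

end ENNReal

theorem moment_weighted_deriv_bound_general
    (p p' : ℝ → ℝ) (s : ℝ)
    (hnn : ∀ x, 0 ≤ p x) (hint : Integrable p)
    (hconv : ∀ x, p x = 0 → p' x = 0) :
    ∫⁻ x : ℝ, ENNReal.ofReal (|x| ^ s * |p' x|) ≤
      (∫⁻ x : ℝ, ENNReal.ofReal (|x| ^ (2 * s) * p x)) ^ ((1 : ℝ) / 2) *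
      (∫⁻ x in {x | 0 < p x}, ENNReal.ofReal ((p' x) ^ 2 / p x)) ^ ((1 : ℝ) / 2) := by
  have hfactor : ∀ x, ENNReal.ofReal (|x| ^ s * |p' x|) ≤
      ENNReal.ofReal (|x| ^ s * √(p x)) * ENNReal.ofReal (|p' x| / √(p x)) := fun x => by
    rcases (hnn x).eq_or_lt with hp0 | hp0
    · simp [hconv x hp0.symm]
    · rw [← ENNReal.ofReal_mul (by positivity), mul_assoc,
        mul_div_cancel₀ _ (Real.sqrt_pos.2 hp0).ne']
  have hmoment : ∀ x : ℝ, ENNReal.ofReal (|x| ^ s * √(p x)) ^ (2 : ℝ) =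
      ENNReal.ofReal (|x| ^ (2 * s) * p x) := fun x => by
    rw [ENNReal.ofReal_rpow_of_nonneg (by positivity) zero_le_two, Real.rpow_two, mul_pow,
      Real.sq_sqrt (hnn x), mul_comm 2 s, Real.rpow_mul (abs_nonneg x), Real.rpow_two]
  have hfisher : ∀ x : ℝ, ENNReal.ofReal (|p' x| / √(p x)) ^ (2 : ℝ) =
      ENNReal.ofReal ((p' x) ^ 2 / p x) := fun x => by
    rw [ENNReal.ofReal_rpow_of_nonneg (by positivity) zero_le_two, Real.rpow_two, div_pow,
      sq_abs, Real.sq_sqrt (hnn x)]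
  -- Off `{x | 0 < p x}` we have `p x = 0`, and division by zero gives `0`.
  have hsupport : Function.support (fun x => ENNReal.ofReal ((p' x) ^ 2 / p x)) ⊆
      {x | 0 < p x} := fun x hx => by
    by_contra hp
    exact hx (by simp [le_antisymm (not_lt.1 hp) (hnn x)])
  have hu : AEMeasurable (fun x : ℝ => ENNReal.ofReal (|x| ^ s * √(p x))) :=
    ((measurable_id.abs.pow_const s).aemeasurable.mul hint.aemeasurable.sqrt).ennreal_ofReal
  simpa only [hmoment, hfisher, setLIntegral_eq_of_support_subset hsupport] using
    ENNReal.lintegral_le_Lp_mul_Lq_of_le_mul Real.HolderConjugate.two_two hu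
      (fun _ => ENNReal.ofReal_ne_top) hfactor

/-- If `X` has an absolutely continuous density `p` (with Radon–Nikodym derivative `p'`,
vanishing where `p` vanishes), then for any `s > 0`,
`∫ |x|^s |p'(x)| dx ≤ √(β_{2s} I(X))` where `β_{2s} = ∫ |x|^{2s} p(x) dx`.
The inequality is stated in `ℝ≥0∞`, so it holds whether or not the right-hand side
is finite. -/
theorem moment_weighted_deriv_bound
    (p p' : ℝ → ℝ) (s : ℝ) (hs : 0 < s)
    (hnn : ∀ x, 0 ≤ p x) (hint : Integrable p) (h1 : ∫ x, p x = 1)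
    (hFTC : ∀ a b : ℝ, p b - p a = ∫ x in a..b, p' x)
    (hconv : ∀ x, p x = 0 → p' x = 0) :
    ∫⁻ x : ℝ, ENNReal.ofReal (|x| ^ s * |p' x|) ≤
      (∫⁻ x : ℝ, ENNReal.ofReal (|x| ^ (2 * s) * p x)) ^ ((1 : ℝ) / 2) *
      (∫⁻ x in {x | 0 < p x}, ENNReal.ofReal ((p' x) ^ 2 / p x)) ^ ((1 : ℝ) / 2) :=
  moment_weighted_deriv_bound_general p p' s hnn hint hconv
end
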